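/- Let X : [a,c] → ℝ^d have C¹ components and let b ∈ (a,c). Then the second-order iterated integral satisfies Chen's identity: S^{i_1,i_2}_{a,c}(X) = S^{i_1,i_2}_{a,b}(X) + S^{i_1}_{a,b}(X) · S^{i_2}_{b,c}(X) + S^{i_1,i_2}_{b,c}(X). -/

import Mathlib

open MeasureTheory intervalIntegral

/-! Split the outer integral over `[a, c]` at `b`. On `[b, c]` the inner integral `∫_a^{t₂}` splits
at `b` into the constant `S^{i₁}_{a,b}`, which factors out against `∫_b^c (Xⁱ²)' = S^{i₂}_{b,c}`,
plus the inner integral `∫_b^{t₂}`, which gives `S^{i₁,i₂}_{b,c}`. -/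

/-- The level-two iterated integral `∫_u^v (∫_u^{t₂} f) g(t₂) dt₂`; for `f = (Xⁱ¹)'`, `g = (Xⁱ²)'`
it is the signature term `S^{i₁,i₂}_{u,v}(X)`. -/
noncomputable def iteratedIntegral (f g : ℝ → ℝ) (u v : ℝ) : ℝ :=
  ∫ t₂ in u..v, (∫ t₁ in u..t₂, f t₁) * g t₂

section

variable {f g : ℝ → ℝ}

theorem intervalIntegrable_primitive_mul (hf : Continuous f) (hg : Continuous g) (u p q : ℝ) :
    IntervalIntegrable (fun t₂ => (∫ t₁ in u..t₂, f t₁) * g t₂) volume p q :=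
  ((continuous_primitive (fun s t => hf.intervalIntegrable s t) u).mul hg).intervalIntegrable p q

theorem integral_primitive_mul_change_basepoint (hf : Continuous f) (hg : Continuous g)
    (u w p q : ℝ) :
    ∫ t₂ in p..q, (∫ t₁ in u..t₂, f t₁) * g t₂ =
      (∫ t in u..w, f t) * (∫ t in p..q, g t) + ∫ t₂ in p..q, (∫ t₁ in w..t₂, f t₁) * g t₂ := by
  have hsplit : ∀ t₂, (∫ t₁ in u..t₂, f t₁) * g t₂ =
      (∫ t in u..w, f t) * g t₂ + (∫ t₁ in w..t₂, f t₁) * g t₂ := fun t₂ => by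
    rw [← integral_add_adjacent_intervals (hf.intervalIntegrable u w)
      (hf.intervalIntegrable w t₂), add_mul]
  simp_rw [hsplit]
  rw [integral_add ((hg.intervalIntegrable p q).const_mul _)
    (intervalIntegrable_primitive_mul hf hg w p q), intervalIntegral.integral_const_mul]

theorem iteratedIntegral_add_adjacent_intervals (hf : Continuous f) (hg : Continuous g)
    (a b c : ℝ) :
    iteratedIntegral f g a c =
      iteratedIntegral f g a b + (∫ t in a..b, f t) * (∫ t in b..c, g t) +
        iteratedIntegral f g b c := by
  rw [iteratedIntegral, ← integral_add_adjacent_intervals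
    (intervalIntegrable_primitive_mul hf hg a a b) (intervalIntegrable_primitive_mul hf hg a b c),
    integral_primitive_mul_change_basepoint hf hg a b b c, add_assoc]
  rfl

end

theorem chen_identity_level_two_general (d : ℕ) (a b c : ℝ)
    (X : ℝ → Fin d → ℝ) (hX : ∀ i, ContDiff ℝ 1 (fun t => X t i)) (i1 i2 : Fin d) :
    (∫ t2 in a..c, (∫ t1 in a..t2, deriv (fun t => X t i1) t1) *
        deriv (fun t => X t i2) t2) =
      (∫ t2 in a..b, (∫ t1 in a..t2, deriv (fun t => X t i1) t1) *
          deriv (fun t => X t i2) t2) +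
      (X b i1 - X a i1) * (X c i2 - X b i2) +
      ∫ t2 in b..c, (∫ t1 in b..t2, deriv (fun t => X t i1) t1) *
          deriv (fun t => X t i2) t2 := by
  have hderiv : ∀ i, Continuous (deriv fun t => X t i) := fun i =>
    (hX i).continuous_deriv le_rfl
  have hftc : ∀ i u v, ∫ t in u..v, deriv (fun t => X t i) t = X v i - X u i := fun i u v =>
    integral_deriv_eq_sub (fun t _ => ((hX i).differentiable one_ne_zero).differentiableAt)
      ((hderiv i).intervalIntegrable u v)
  rw [← hftc i1 a b, ← hftc i2 b c]
  exact iteratedIntegral_add_adjacent_intervals (hderiv i1) (hderiv i2) a b c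

/-- Chen's identity at level 2:
S^{i1,i2}_{a,c} = S^{i1,i2}_{a,b} + S^{i1}_{a,b} S^{i2}_{b,c} + S^{i1,i2}_{b,c},
where S^{i}_{u,v}(X) = X^i_v - X^i_u and
S^{i1,i2}_{u,v}(X) = ∫_u^v (∫_u^{t2} (X^{i1})'(t1) dt1) (X^{i2})'(t2) dt2. -/
theorem chen_identity_level_two (d : ℕ) (a b c : ℝ) (hab : a < b) (hbc : b < c)
    (X : ℝ → Fin d → ℝ) (hX : ∀ i, ContDiff ℝ 1 (fun t => X t i)) (i1 i2 : Fin d) :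
    (∫ t2 in a..c, (∫ t1 in a..t2, deriv (fun t => X t i1) t1) *
        deriv (fun t => X t i2) t2) =
      (∫ t2 in a..b, (∫ t1 in a..t2, deriv (fun t => X t i1) t1) *
          deriv (fun t => X t i2) t2) +
      (X b i1 - X a i1) * (X c i2 - X b i2) +
      ∫ t2 in b..c, (∫ t1 in b..t2, deriv (fun t => X t i1) t1) *
          deriv (fun t => X t i2) t2 :=
  chen_identity_level_two_general d a b c X hX i1 i2
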